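/- arXiv:0707.2557 — 3 statements merged into one kernel-verified Lean document; each statement's English description precedes it below -/
import Mathlib

section
/- Let H_x and H_y be symmetric n×n real matrices with ‖H_x − H_y‖ ≤ K|x−y| (operator norm), and let E^{μ₁}_x, E^{μ₂}_y denote the orthogonal spectral projections of H_x and H_y onto the eigenspaces with eigenvalues μ₁ and μ₂ respectively. Then ‖E^{μ₁}_x E^{μ₂}_y‖ ≤ (min{|μ₁|,|μ₂|} + K|x−y|)/max{|μ₁|,|μ₂|}, provided max{|μ₁|,|μ₂|} > 0. -/
noncomputable def Eproj {n : ℕ} (H : Matrix (Fin n) (Fin n) ℝ) (μ : ℝ) :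
    EuclideanSpace ℝ (Fin n) →L[ℝ] EuclideanSpace ℝ (Fin n) :=
  (Module.End.eigenspace (Matrix.toEuclideanLin H) μ).subtypeL.comp
    (Submodule.orthogonalProjectionOnto (Module.End.eigenspace (Matrix.toEuclideanLin H) μ))

/-- Operator norm of a matrix acting on Euclidean space. -/
noncomputable def opNorm {n : ℕ} (M : Matrix (Fin n) (Fin n) ℝ) : ℝ :=
  ‖LinearMap.toContinuousLinearMap (Matrix.toEuclideanLin M)‖

/-!
With `P` the spectral projection of `H_x` at `μ₁` and `Q` that of `H_y` at `μ₂`, we have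
`P H_x = μ₁ P` (as `H_x` is symmetric) and `H_y Q = μ₂ Q`, hence `(μ₁ - μ₂) P Q = P (H_x - H_y) Q`
and `|μ₁ - μ₂| ‖P Q‖ ≤ ‖H_x - H_y‖`. Since `‖P Q‖ ≤ 1` and `max |μᵢ| - min |μᵢ| ≤ |μ₁ - μ₂|`,
this gives `max |μᵢ| ‖P Q‖ ≤ min |μᵢ| + ‖H_x - H_y‖`.
-/

theorem norm_sub_mul_norm_mul_le {𝕜 A : Type*} [NormedField 𝕜] [NormedRing A]
    [NormedAlgebra 𝕜 A] {p q t s : A} {μ ν : 𝕜} (hp : p * t = μ • p) (hq : s * q = ν • q) :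
    ‖μ - ν‖ * ‖p * q‖ ≤ ‖p‖ * ‖t - s‖ * ‖q‖ := by
  have key : (μ - ν) • (p * q) = p * (t - s) * q := by
    rw [mul_sub, sub_mul, hp, mul_assoc p s q, hq, smul_mul_assoc, mul_smul_comm, sub_smul]
  rw [← norm_smul, key]
  exact norm_mul₃_le

theorem max_abs_mul_le_min_abs_add {μ ν a d : ℝ} (ha₀ : 0 ≤ a) (ha₁ : a ≤ 1)
    (h : |μ - ν| * a ≤ d) : max |μ| |ν| * a ≤ min |μ| |ν| + d := by
  have hgap : max |μ| |ν| - min |μ| |ν| ≤ |μ - ν| := by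
    rw [max_sub_min_eq_abs]; exact abs_sub_comm |μ| |ν| ▸ abs_abs_sub_abs_le_abs_sub μ ν
  have : min |μ| |ν| * a ≤ min |μ| |ν| := mul_le_of_le_one_right (by positivity) ha₁
  nlinarith

section Eigenspace

variable {𝕜 E : Type*} [RCLike 𝕜] [NormedAddCommGroup E] [InnerProductSpace 𝕜 E]
  (T : E →L[𝕜] E) (μ : 𝕜) [(Module.End.eigenspace (T : E →ₗ[𝕜] E) μ).HasOrthogonalProjection]

theorem comp_starProjection_eigenspace :
    T ∘L (Module.End.eigenspace (T : E →ₗ[𝕜] E) μ).starProjection =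
      μ • (Module.End.eigenspace (T : E →ₗ[𝕜] E) μ).starProjection := by
  ext v
  exact Module.End.mem_eigenspace_iff.mp (Submodule.starProjection_apply_mem _ v)

theorem starProjection_eigenspace_comp [CompleteSpace E] (hT : IsSelfAdjoint T) :
    (Module.End.eigenspace (T : E →ₗ[𝕜] E) μ).starProjection ∘L T =
      starRingEnd 𝕜 μ • (Module.End.eigenspace (T : E →ₗ[𝕜] E) μ).starProjection := by
  apply ContinuousLinearMap.adjoint.injective
  rw [ContinuousLinearMap.adjoint_comp, hT.adjoint_eq, (isSelfAdjoint_starProjection _).adjoint_eq,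
    comp_starProjection_eigenspace, map_smulₛₗ, (isSelfAdjoint_starProjection _).adjoint_eq,
    RCLike.conj_conj]

end Eigenspace

theorem stmt0_general {n : ℕ} (K : ℝ) (x y : EuclideanSpace ℝ (Fin n))
    (Hx Hy : Matrix (Fin n) (Fin n) ℝ) (hHx : Hx.IsHermitian)
    (hLip : opNorm (Hx - Hy) ≤ K * ‖x - y‖)
    (μ₁ μ₂ : ℝ) (hmax : 0 < max (abs μ₁) (abs μ₂)) :
    ‖(Eproj Hx μ₁).comp (Eproj Hy μ₂)‖ ≤
      (min (abs μ₁) (abs μ₂) + K * ‖x - y‖) / max (abs μ₁) (abs μ₂) := by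
  set Tx := LinearMap.toContinuousLinearMap (Matrix.toEuclideanLin Hx)
  set Ty := LinearMap.toContinuousLinearMap (Matrix.toEuclideanLin Hy)
  have hTx : IsSelfAdjoint Tx :=
    LinearMap.IsSymmetric.isSelfAdjoint (Matrix.isSymmetric_toEuclideanLin_iff.mpr hHx)
  have hP : Eproj Hx μ₁ * Tx = μ₁ • Eproj Hx μ₁ := starProjection_eigenspace_comp Tx μ₁ hTx
  have hQ : Ty * Eproj Hy μ₂ = μ₂ • Eproj Hy μ₂ := comp_starProjection_eigenspace Ty μ₂
  have hTxy : ‖Tx - Ty‖ ≤ K * ‖x - y‖ := by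
    rwa [opNorm, map_sub, map_sub] at hLip
  have hP₁ : ‖Eproj Hx μ₁‖ ≤ 1 := Submodule.starProjection_norm_le _
  have hQ₁ : ‖Eproj Hy μ₂‖ ≤ 1 := Submodule.starProjection_norm_le _
  rw [le_div_iff₀ hmax, mul_comm]
  refine max_abs_mul_le_min_abs_add (norm_nonneg _)
    ((ContinuousLinearMap.opNorm_comp_le _ _).trans (mul_le_one₀ hP₁ (norm_nonneg _) hQ₁)) ?_
  calc |μ₁ - μ₂| * ‖(Eproj Hx μ₁).comp (Eproj Hy μ₂)‖
      ≤ ‖Eproj Hx μ₁‖ * ‖Tx - Ty‖ * ‖Eproj Hy μ₂‖ := norm_sub_mul_norm_mul_le hP hQ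
    _ ≤ 1 * ‖Tx - Ty‖ * 1 := by gcongr
    _ ≤ K * ‖x - y‖ := by rwa [one_mul, mul_one]

theorem stmt0 {n : ℕ} (K : ℝ) (hK : 0 ≤ K) (x y : EuclideanSpace ℝ (Fin n))
    (Hx Hy : Matrix (Fin n) (Fin n) ℝ) (hHx : Hx.IsHermitian) (hHy : Hy.IsHermitian)
    (hLip : opNorm (Hx - Hy) ≤ K * ‖x - y‖)
    (μ₁ μ₂ : ℝ) (hmax : 0 < max (abs μ₁) (abs μ₂)) :
    ‖(Eproj Hx μ₁).comp (Eproj Hy μ₂)‖ ≤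
      (min (abs μ₁) (abs μ₂) + K * ‖x - y‖) / max (abs μ₁) (abs μ₂) :=
  stmt0_general K x y Hx Hy hHx hLip μ₁ μ₂ hmax
end

section
/- For a real symmetric n×n matrix H, constant K > 0 and the norm N[v,r] := r^{-1}(Σ_μ |E^μ v|²((|μ|r)^{1/2}+(Kr²)^{1/3})²)^{1/2}, define N[v] := inf{r > 0 : N[v,r] < 1}. Then for all v, w ∈ ℝⁿ: (N[v+w])^{1/3} ≤ (N[v])^{1/3} + (N[w])^{1/3}. -/
open scoped RealInnerProductSpace

/-- The nonisotropic norm `N[v,r]`, with the sum running over the eigenvalues of `H`. -/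
noncomputable def Nnorm {n : ℕ} (H : Matrix (Fin n) (Fin n) ℝ) (hH : H.IsHermitian)
    (K : ℝ) (v : EuclideanSpace ℝ (Fin n)) (r : ℝ) : ℝ :=
  r⁻¹ * Real.sqrt (∑ μ ∈ Finset.image hH.eigenvalues Finset.univ,
    ‖Eproj H μ v‖ ^ 2 * (((abs μ) * r) ^ ((1:ℝ)/2) + (K * r ^ 2) ^ ((1:ℝ)/3)) ^ 2)

/-- The dual nonisotropic norm `N*[v,r]`. -/
noncomputable def Ndual {n : ℕ} (H : Matrix (Fin n) (Fin n) ℝ) (hH : H.IsHermitian)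
    (K : ℝ) (v : EuclideanSpace ℝ (Fin n)) (r : ℝ) : ℝ :=
  Real.sqrt (∑ μ ∈ Finset.image hH.eigenvalues Finset.univ,
    ‖Eproj H μ v‖ ^ 2 / (((abs μ) * r) ^ ((1:ℝ)/2) + (K * r ^ 2) ^ ((1:ℝ)/3)) ^ 2)

/-- `N[v] = inf { r > 0 : N[v,r] < 1 }`. -/
noncomputable def NnormInf {n : ℕ} (H : Matrix (Fin n) (Fin n) ℝ) (hH : H.IsHermitian)
    (K : ℝ) (v : EuclideanSpace ℝ (Fin n)) : ℝ :=
  sInf {r : ℝ | 0 < r ∧ Nnorm H hH K v r < 1}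


/-! Each weight `(|μ| r)^(1/2) + (K r²)^(1/3)` grows at most like `r^(2/3)`, so
`r ↦ r^(1/3) N[v,r]` is nonincreasing; and `N[·,r]` is a weighted `ℓ²` norm of the spectral
components, hence subadditive. If `N[v,s] < 1`, `N[w,t] < 1` and `r^(1/3) = s^(1/3) + t^(1/3)`, then
`r^(1/3) N[v+w,r] ≤ s^(1/3) N[v,s] + t^(1/3) N[w,t] < r^(1/3)`, so `r` is admissible for `v + w`;
taking infima over `s` and `t` gives the claim. -/

open Finset

theorem Real.sqrt_sum_sq_le_of_le_add {ι : Type*} (s : Finset ι) {f g h : ι → ℝ}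
    (hf : ∀ i ∈ s, 0 ≤ f i) (hg : ∀ i ∈ s, 0 ≤ g i) (hh : ∀ i ∈ s, 0 ≤ h i)
    (hfgh : ∀ i ∈ s, f i ≤ g i + h i) :
    √(∑ i ∈ s, f i ^ 2) ≤ √(∑ i ∈ s, g i ^ 2) + √(∑ i ∈ s, h i ^ 2) := by
  have minkowski := Real.Lp_add_le_of_nonneg s (p := 2) one_le_two hg hh
  simp only [Real.rpow_two, ← Real.sqrt_eq_rpow] at minkowski
  refine le_trans (Real.sqrt_le_sqrt (sum_le_sum fun i hi => ?_)) minkowski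
  exact pow_le_pow_left₀ (hf i hi) (hfgh i hi) 2

theorem Real.le_rpow_sInf {S : Set ℝ} (hS : S.Nonempty) (hS0 : ∀ x ∈ S, 0 ≤ x) {p a : ℝ}
    (hp : 0 < p) (ha : ∀ x ∈ S, a ≤ x ^ p) : a ≤ sInf S ^ p := by
  rcases le_or_gt a 0 with ha0 | ha0
  · exact ha0.trans (Real.rpow_nonneg (Real.sInf_nonneg hS0) p)
  have hroot : a ^ p⁻¹ ≤ sInf S := le_csInf hS fun x hx => by
    rw [Real.rpow_inv_le_iff_of_pos ha0.le (hS0 x hx) hp]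
    exact ha x hx
  calc a = (a ^ p⁻¹) ^ p := by rw [← Real.rpow_mul ha0.le, inv_mul_cancel₀ hp.ne', Real.rpow_one]
    _ ≤ sInf S ^ p := Real.rpow_le_rpow (by positivity) hroot hp.le

noncomputable def Nweight (K μ r : ℝ) : ℝ :=
  (|μ| * r) ^ ((1:ℝ)/2) + (K * r ^ 2) ^ ((1:ℝ)/3)

theorem Nweight_nonneg {K : ℝ} (hK : 0 ≤ K) (μ : ℝ) {r : ℝ} (hr : 0 ≤ r) :
    0 ≤ Nweight K μ r := by
  unfold Nweight; positivity

theorem Nweight_mul_le {K : ℝ} (hK : 0 ≤ K) (μ : ℝ) {s a : ℝ} (hs : 0 ≤ s) (ha : 1 ≤ a) :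
    Nweight K μ (s * a) ≤ a ^ ((2:ℝ)/3) * Nweight K μ s := by
  have ha0 : 0 ≤ a := zero_le_one.trans ha
  have hsqrt : a ^ ((1:ℝ)/2) ≤ a ^ ((2:ℝ)/3) :=
    Real.rpow_le_rpow_of_exponent_le ha (by norm_num)
  have hlin : (|μ| * (s * a)) ^ ((1:ℝ)/2) = (|μ| * s) ^ ((1:ℝ)/2) * a ^ ((1:ℝ)/2) := by
    rw [← mul_assoc, Real.mul_rpow (by positivity) ha0]
  have hquad : (K * (s * a) ^ 2) ^ ((1:ℝ)/3) = (K * s ^ 2) ^ ((1:ℝ)/3) * a ^ ((2:ℝ)/3) := by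
    rw [mul_pow, ← mul_assoc, Real.mul_rpow (by positivity) (by positivity),
      ← Real.rpow_natCast a 2, ← Real.rpow_mul ha0]
    norm_num
  unfold Nweight
  rw [hlin, hquad]
  nlinarith [Real.rpow_nonneg (mul_nonneg (abs_nonneg μ) hs) ((1:ℝ)/2)]

theorem Nnorm_eq_Nweight {n : ℕ} (H : Matrix (Fin n) (Fin n) ℝ) (hH : H.IsHermitian) (K : ℝ)
    (v : EuclideanSpace ℝ (Fin n)) (r : ℝ) :
    Nnorm H hH K v r =
      r⁻¹ * √(∑ μ ∈ image hH.eigenvalues univ, (‖Eproj H μ v‖ * Nweight K μ r) ^ 2) := by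
  simp only [Nnorm, Nweight, mul_pow]

section

variable {n : ℕ} (H : Matrix (Fin n) (Fin n) ℝ) (hH : H.IsHermitian) {K : ℝ}

theorem Nnorm_add_le (hK : 0 ≤ K) (v w : EuclideanSpace ℝ (Fin n)) {r : ℝ} (hr : 0 ≤ r) :
    Nnorm H hH K (v + w) r ≤ Nnorm H hH K v r + Nnorm H hH K w r := by
  have hterm (u : EuclideanSpace ℝ (Fin n)) :
      ∀ μ ∈ image hH.eigenvalues univ, 0 ≤ ‖Eproj H μ u‖ * Nweight K μ r :=
    fun μ _ => mul_nonneg (norm_nonneg _) (Nweight_nonneg hK μ hr)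
  simp only [Nnorm_eq_Nweight, ← mul_add]
  refine mul_le_mul_of_nonneg_left (Real.sqrt_sum_sq_le_of_le_add _ (hterm _) (hterm v) (hterm w)
    fun μ _ => ?_) (inv_nonneg.2 hr)
  rw [map_add, ← add_mul]
  exact mul_le_mul_of_nonneg_right (norm_add_le _ _) (Nweight_nonneg hK μ hr)

theorem antitoneOn_rpow_third_mul_Nnorm (hK : 0 ≤ K) (u : EuclideanSpace ℝ (Fin n)) :
    AntitoneOn (fun r => r ^ ((1:ℝ)/3) * Nnorm H hH K u r) (Set.Ioi 0) := by
  intro s hs r hr hsr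
  simp only [Set.mem_Ioi] at hs hr
  obtain ⟨a, rfl⟩ : ∃ a, r = s * a := ⟨r / s, by field_simp⟩
  have ha : 1 ≤ a := le_of_mul_le_mul_left (by simpa using hsr) hs
  have ha0 : 0 < a := zero_lt_one.trans_le ha
  set X : ℝ → ℝ :=
    fun r => √(∑ μ ∈ image hH.eigenvalues univ, (‖Eproj H μ u‖ * Nweight K μ r) ^ 2)
  have hX : X (s * a) ≤ a ^ ((2:ℝ)/3) * X s := by
    rw [← Real.sqrt_sq (Real.rpow_nonneg ha0.le _), ← Real.sqrt_mul (sq_nonneg _), mul_sum]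
    refine Real.sqrt_le_sqrt (sum_le_sum fun μ _ => ?_)
    rw [← mul_pow, mul_left_comm]
    exact pow_le_pow_left₀ (mul_nonneg (norm_nonneg _) (Nweight_nonneg hK μ (by positivity)))
      (mul_le_mul_of_nonneg_left (Nweight_mul_le hK μ hs.le ha) (norm_nonneg _)) 2
  have hcube : a ^ ((1:ℝ)/3) * a ^ ((2:ℝ)/3) = a := by
    rw [← Real.rpow_add ha0]; norm_num
  dsimp only
  rw [Nnorm_eq_Nweight, Nnorm_eq_Nweight]
  calc (s * a) ^ ((1:ℝ)/3) * ((s * a)⁻¹ * X (s * a))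
      ≤ (s * a) ^ ((1:ℝ)/3) * ((s * a)⁻¹ * (a ^ ((2:ℝ)/3) * X s)) := by gcongr
    _ = s ^ ((1:ℝ)/3) * (s⁻¹ * X s) := by
        rw [Real.mul_rpow hs.le ha0.le]
        field_simp
        linear_combination X s * hcube

theorem Nnorm_add_lt_one (hK : 0 ≤ K) {v w : EuclideanSpace ℝ (Fin n)} {s t r : ℝ}
    (hs : 0 < s) (hvs : Nnorm H hH K v s < 1) (ht : 0 < t) (hwt : Nnorm H hH K w t < 1)
    (hr : 0 < r) (hstr : s ^ ((1:ℝ)/3) + t ^ ((1:ℝ)/3) ≤ r ^ ((1:ℝ)/3)) :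
    Nnorm H hH K (v + w) r < 1 := by
  have hs3 : 0 < s ^ ((1:ℝ)/3) := Real.rpow_pos_of_pos hs _
  have ht3 : 0 < t ^ ((1:ℝ)/3) := Real.rpow_pos_of_pos ht _
  have hsr : s ≤ r := (Real.rpow_le_rpow_iff (z := 1/3) hs.le hr.le (by norm_num)).1 (by linarith)
  have htr : t ≤ r := (Real.rpow_le_rpow_iff (z := 1/3) ht.le hr.le (by norm_num)).1 (by linarith)
  have hv := antitoneOn_rpow_third_mul_Nnorm H hH hK v hs hr hsr
  have hw := antitoneOn_rpow_third_mul_Nnorm H hH hK w ht hr htr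
  refine lt_of_mul_lt_mul_left ?_ (Real.rpow_nonneg hr.le ((1:ℝ)/3))
  calc r ^ ((1:ℝ)/3) * Nnorm H hH K (v + w) r
      ≤ r ^ ((1:ℝ)/3) * Nnorm H hH K v r + r ^ ((1:ℝ)/3) * Nnorm H hH K w r := by
        rw [← mul_add]
        exact mul_le_mul_of_nonneg_left (Nnorm_add_le H hH hK v w hr.le) (by positivity)
    _ ≤ s ^ ((1:ℝ)/3) * Nnorm H hH K v s + t ^ ((1:ℝ)/3) * Nnorm H hH K w t := add_le_add hv hw
    _ < s ^ ((1:ℝ)/3) + t ^ ((1:ℝ)/3) :=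
        add_lt_add (mul_lt_of_lt_one_right hs3 hvs) (mul_lt_of_lt_one_right ht3 hwt)
    _ ≤ r ^ ((1:ℝ)/3) * 1 := by rw [mul_one]; exact hstr

theorem NnormInf_add_rpow_third_le (hK : 0 ≤ K) {v w : EuclideanSpace ℝ (Fin n)} {s t : ℝ}
    (hs : 0 < s) (hvs : Nnorm H hH K v s < 1) (ht : 0 < t) (hwt : Nnorm H hH K w t < 1) :
    NnormInf H hH K (v + w) ^ ((1:ℝ)/3) ≤ s ^ ((1:ℝ)/3) + t ^ ((1:ℝ)/3) := by
  set c := s ^ ((1:ℝ)/3) + t ^ ((1:ℝ)/3)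
  have hc : 0 < c := by positivity
  have hcube : (c ^ 3) ^ ((1:ℝ)/3) = c := by
    rw [← Real.rpow_natCast, ← Real.rpow_mul hc.le]; norm_num
  have hmem : c ^ 3 ∈ {r : ℝ | 0 < r ∧ Nnorm H hH K (v + w) r < 1} :=
    ⟨by positivity, Nnorm_add_lt_one H hH hK hs hvs ht hwt (by positivity) hcube.ge⟩
  have hnonneg : ∀ r ∈ {r : ℝ | 0 < r ∧ Nnorm H hH K (v + w) r < 1}, 0 ≤ r :=
    fun _ hr => hr.1.le
  calc NnormInf H hH K (v + w) ^ ((1:ℝ)/3) ≤ (c ^ 3) ^ ((1:ℝ)/3) :=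
        Real.rpow_le_rpow (Real.sInf_nonneg hnonneg) (csInf_le ⟨0, hnonneg⟩ hmem) (by norm_num)
    _ = c := hcube

end

theorem stmt4_general {n : ℕ} (H : Matrix (Fin n) (Fin n) ℝ) (hH : H.IsHermitian)
    (K : ℝ) (hK : 0 < K) (v w : EuclideanSpace ℝ (Fin n))
    (hv : {r : ℝ | 0 < r ∧ Nnorm H hH K v r < 1}.Nonempty)
    (hw : {r : ℝ | 0 < r ∧ Nnorm H hH K w r < 1}.Nonempty) :
    (NnormInf H hH K (v + w)) ^ ((1:ℝ)/3) ≤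
      (NnormInf H hH K v) ^ ((1:ℝ)/3) + (NnormInf H hH K w) ^ ((1:ℝ)/3) := by
  have hnonneg (u : EuclideanSpace ℝ (Fin n)) :
      ∀ r ∈ {r : ℝ | 0 < r ∧ Nnorm H hH K u r < 1}, 0 ≤ r := fun _ hr => hr.1.le
  have hv_bound : ∀ t ∈ {r : ℝ | 0 < r ∧ Nnorm H hH K w r < 1},
      NnormInf H hH K (v + w) ^ ((1:ℝ)/3) - t ^ ((1:ℝ)/3) ≤ NnormInf H hH K v ^ ((1:ℝ)/3) :=
    fun t ⟨ht, hwt⟩ => Real.le_rpow_sInf hv (hnonneg v) (by norm_num) fun s ⟨hs, hvs⟩ => by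
      linarith [NnormInf_add_rpow_third_le H hH hK.le hs hvs ht hwt]
  have hw_bound : NnormInf H hH K (v + w) ^ ((1:ℝ)/3) - NnormInf H hH K v ^ ((1:ℝ)/3) ≤
      NnormInf H hH K w ^ ((1:ℝ)/3) :=
    Real.le_rpow_sInf hw (hnonneg w) (by norm_num) fun t ht => by linarith [hv_bound t ht]
  linarith

theorem stmt4 {n : ℕ} (H : Matrix (Fin n) (Fin n) ℝ) (hH : H.IsHermitian)
    (K : ℝ) (hK : 0 < K) (v w : EuclideanSpace ℝ (Fin n))
    (hv : {r : ℝ | 0 < r ∧ Nnorm H hH K v r < 1}.Nonempty)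
    (hw : {r : ℝ | 0 < r ∧ Nnorm H hH K w r < 1}.Nonempty)
    (hvw : {r : ℝ | 0 < r ∧ Nnorm H hH K (v + w) r < 1}.Nonempty)
    (hv0 : 0 < NnormInf H hH K v) (hw0 : 0 < NnormInf H hH K w) :
    (NnormInf H hH K (v + w)) ^ ((1:ℝ)/3) ≤
      (NnormInf H hH K v) ^ ((1:ℝ)/3) + (NnormInf H hH K w) ^ ((1:ℝ)/3) :=
  stmt4_general H hH K hK v w hv hw
end

section
/- Let T be a real n×m matrix of rank r, with P_L the orthogonal projection onto the kernel of Tᵗ and P_R the orthogonal projection onto the kernel of T. Then there exists a matrix A with P_R A = 0 and A P_L = 0 such that for any matrix S close to T, S has rank exactly r if and only if P_L S P_R − P_L S (I−P_R) A' (I−P_L) S P_R = 0, where A' is the appropriate pseudo-inverse of (I−P_L)S(I−P_R). In particular, if S = T then the left-hand side vanishes. -/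
/-!
Write `Q_L = 1 - P_L`, `Q_R = 1 - P_R` and `B = Q_L S Q_R`. With `A = (TᵀT + P_R)⁻¹Tᵀ`, the
Moore–Penrose inverse of `T`, the matrix `P_R + A T` is the identity, so `P_R + A B` stays
invertible near `T`; hence `rank B ≥ m - rank P_R = r` there, while `rank B ≤ rank Q_L = r`.
Consequently any pseudo-inverse `A'` of `B` satisfies `B A' = Q_L` and `A' B = Q_R`. Then
`u = P_L S A'` and `v = A' S P_R` square to zero, and `(1 - u) S (1 - v) = B + Σ` with `Σ` the Schur
complement of the statement. As `B` and `Σ` occupy complementary blocks, `rank S = r + rank Σ`.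
-/

open Matrix

/-- `N` is a Moore–Penrose pseudo-inverse of `M`. -/
def IsPseudoInv {k l : ℕ} (M : Matrix (Fin k) (Fin l) ℝ) (N : Matrix (Fin l) (Fin k) ℝ) :
    Prop :=
  M * N * M = M ∧ N * M * N = N ∧ Matrix.transpose (M * N) = M * N ∧ Matrix.transpose (N * M) = N * M

open Filter Topology

namespace Matrix

section Field

variable {K : Type*} [Field K] {m n : Type*} [Fintype n]

theorem rank_add_le (X Y : Matrix m n K) : (X + Y).rank ≤ X.rank + Y.rank := by
  have hle : LinearMap.range (X + Y).mulVecLin ≤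
      LinearMap.range X.mulVecLin ⊔ LinearMap.range Y.mulVecLin := by
    rintro _ ⟨v, rfl⟩
    rw [mulVecLin_apply, add_mulVec]
    exact Submodule.add_mem_sup ⟨v, rfl⟩ ⟨v, rfl⟩
  exact (Submodule.finrank_mono hle).trans (Submodule.finrank_add_le_finrank_add_finrank _ _)

theorem rank_eq_zero_iff {X : Matrix m n K} : X.rank = 0 ↔ X = 0 := by
  classical
  refine ⟨fun h => ?_, fun h => h ▸ rank_zero⟩
  rw [rank, Submodule.finrank_eq_zero, LinearMap.range_eq_bot] at h
  exact ext_of_mulVec_single fun j => by rw [zero_mulVec]; exact LinearMap.congr_fun h _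

theorem rank_add_eq_of_mul_eq [Fintype m] {E : Matrix m m K} {F : Matrix n n K}
    {X Y : Matrix m n K} (hEX : E * X = 0) (hEY : E * Y = Y) (hXF : X * F = 0) (hYF : Y * F = Y) :
    (X + Y).rank = X.rank + Y.rank := by
  refine le_antisymm (rank_add_le X Y) ?_
  have hdisj : LinearMap.range X.mulVecLin ⊓ LinearMap.range Y.mulVecLin = ⊥ := by
    refine (Submodule.eq_bot_iff _).2 ?_
    rintro _ ⟨⟨v, rfl⟩, ⟨w, hw⟩⟩
    simp only [mulVecLin_apply] at hw ⊢
    rw [← hw, ← hEY, ← mulVec_mulVec, hw, mulVec_mulVec, hEX, zero_mulVec]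
  have hle : LinearMap.range X.mulVecLin ⊔ LinearMap.range Y.mulVecLin ≤
      LinearMap.range (X + Y).mulVecLin := by
    refine sup_le ?_ ?_
    · rintro _ ⟨v, rfl⟩
      refine ⟨v - F *ᵥ v, ?_⟩
      simp [mulVec_sub, mulVec_mulVec, hXF, hYF]
    · rintro _ ⟨v, rfl⟩
      refine ⟨F *ᵥ v, ?_⟩
      simp [mulVec_mulVec, hXF, hYF]
  have := Submodule.finrank_sup_add_finrank_inf_eq (LinearMap.range X.mulVecLin)
    (LinearMap.range Y.mulVecLin)
  rw [hdisj, finrank_bot, add_zero] at this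
  exact this ▸ Submodule.finrank_mono hle

theorem rank_add_rank_one_sub [DecidableEq n] {P : Matrix n n K} (hP : P * P = P) :
    P.rank + (1 - P).rank = Fintype.card n := by
  refine le_antisymm (rank_add_rank_le_card_of_mul_eq_zero ?_) ?_
  · rw [mul_sub, mul_one, hP, sub_self]
  · simpa [rank_one] using rank_add_le P (1 - P)

theorem rank_add_rank_eq_card_of_mulVec_eq_self_iff {P : Matrix n n K} {M : Matrix m n K}
    (hP : P * P = P) (hker : ∀ v, P *ᵥ v = v ↔ M *ᵥ v = 0) :
    P.rank + M.rank = Fintype.card n := by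
  have hrange : LinearMap.range P.mulVecLin = LinearMap.ker M.mulVecLin := by
    ext v
    refine ⟨?_, fun hv => ⟨v, (hker v).2 hv⟩⟩
    rintro ⟨w, rfl⟩
    exact (hker _).1 (by simp [mulVec_mulVec, hP])
  have := LinearMap.finrank_range_add_finrank_ker M.mulVecLin
  rw [← hrange, Module.finrank_fintype_fun_eq_card] at this
  rw [rank, rank]; omega

theorem rank_one_sub_eq_rank_of_mulVec_eq_self_iff [DecidableEq n] {P : Matrix n n K}
    {M : Matrix m n K} (hP : P * P = P) (hker : ∀ v, P *ᵥ v = v ↔ M *ᵥ v = 0) :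
    (1 - P).rank = M.rank := by
  have := rank_add_rank_one_sub hP
  have := rank_add_rank_eq_card_of_mulVec_eq_self_iff hP hker
  omega

theorem mul_eq_zero_of_mulVec_eq_self_iff {P : Matrix n n K} {M : Matrix m n K}
    (hP : P * P = P) (hker : ∀ v, P *ᵥ v = v ↔ M *ᵥ v = 0) : M * P = 0 := by
  classical
  exact ext_of_mulVec_single fun j => by
    rw [← mulVec_mulVec, zero_mulVec, (hker _).1 (by rw [mulVec_mulVec, hP])]

theorem proj_mul_transpose_mul_self_add [Fintype m] {M : Matrix m n K} {P : Matrix n n K}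
    (hPs : Pᵀ = P) (hP : P * P = P) (hMP : M * P = 0) :
    P * (Mᵀ * M + P) = P := by
  rw [mul_add, ← Matrix.mul_assoc, ← hPs, ← transpose_mul, hMP, transpose_zero, Matrix.zero_mul,
    zero_add, hPs, hP]

theorem mul_eq_zero_of_mulVec_eq_self_iff_transpose {P : Matrix n n K}
    {M : Matrix n m K} (hPs : Pᵀ = P) (hP : P * P = P) (hker : ∀ v, P *ᵥ v = v ↔ Mᵀ *ᵥ v = 0) :
    P * M = 0 := by
  simpa [hPs] using congrArg transpose (mul_eq_zero_of_mulVec_eq_self_iff hP hker)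

theorem one_sub_mul_mul_one_sub_eq_self [Fintype m] [DecidableEq m] [DecidableEq n]
    {E : Matrix m m K} {F : Matrix n n K} {T : Matrix m n K} (hET : E * T = 0) (hTF : T * F = 0) :
    (1 - E) * T * (1 - F) = T := by
  rw [Matrix.sub_mul, Matrix.one_mul, hET, sub_zero, Matrix.mul_sub, Matrix.mul_one, hTF, sub_zero]

theorem isUnit_det_one_add_of_mul_self_eq_zero [DecidableEq n] {N : Matrix n n K}
    (hN : N * N = 0) : IsUnit (1 + N).det :=
  (isUnit_iff_isUnit_det _).1 (IsNilpotent.isUnit_one_add ⟨2, by rw [pow_two, hN]⟩)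

theorem rank_eq_rank_compress_add_schur [Fintype m] [DecidableEq m] [DecidableEq n]
    {E : Matrix m m K} {F : Matrix n n K} {S : Matrix m n K} {A : Matrix n m K}
    (hAE : A * E = 0) (hFA : F * A = 0)
    (hBA : (1 - E) * S * (1 - F) * A = 1 - E) (hAB : A * ((1 - E) * S * (1 - F)) = 1 - F) :
    S.rank = ((1 - E) * S * (1 - F) + (E * S * F - E * S * A * S * F)).rank := by
  have hRA : (1 - F) * A = A := by rw [Matrix.sub_mul, Matrix.one_mul, hFA, sub_zero]
  obtain ⟨X, hX⟩ : ∃ X, X = (1 - E) * S * (1 - F) + (E * S * F - E * S * A * S * F) := ⟨_, rfl⟩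
  have hAX : A * X = 1 - F := by
    rw [hX, Matrix.mul_add, hAB, add_eq_left]
    simp only [Matrix.mul_sub, ← Matrix.mul_assoc, hAE, Matrix.zero_mul, sub_self]
  have hXA : X * A = 1 - E := by
    rw [hX, Matrix.add_mul, hBA, add_eq_left]
    simp only [Matrix.sub_mul, Matrix.mul_assoc, hFA, Matrix.mul_zero, sub_self]
  have hS : (1 + E * S * A) * X * (1 + A * S * F) = S :=
    calc (1 + E * S * A) * X * (1 + A * S * F)
        = X + E * S * (A * X) + X * A * S * F + E * S * (A * X) * A * S * F := by
          simp only [Matrix.add_mul, Matrix.mul_add, Matrix.one_mul, Matrix.mul_one,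
            Matrix.mul_assoc]
          abel
      _ = X + E * S * (1 - F) + (1 - E) * S * F + E * S * A * S * F := by
          rw [hAX, hXA, Matrix.mul_assoc (E * S) (1 - F) A, hRA]
      _ = S := by
          rw [hX]
          simp only [Matrix.sub_mul, Matrix.mul_sub, Matrix.one_mul, Matrix.mul_one]
          abel
  have hu : E * S * A * (E * S * A) = 0 := by
    rw [Matrix.mul_assoc, ← Matrix.mul_assoc A, ← Matrix.mul_assoc A, hAE, Matrix.zero_mul,
      Matrix.zero_mul, Matrix.mul_zero]
  have hv : A * S * F * (A * S * F) = 0 := by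
    rw [Matrix.mul_assoc (A * S), ← Matrix.mul_assoc F, ← Matrix.mul_assoc F, hFA,
      Matrix.zero_mul, Matrix.zero_mul, Matrix.mul_zero]
  conv_lhs => rw [← hS]
  rw [rank_mul_eq_left_of_isUnit_det _ _ (isUnit_det_one_add_of_mul_self_eq_zero hv),
    rank_mul_eq_right_of_isUnit_det _ _ (isUnit_det_one_add_of_mul_self_eq_zero hu), hX]

theorem rank_eq_rank_add_rank_schur [Fintype m] [DecidableEq m] [DecidableEq n]
    {E : Matrix m m K} {F : Matrix n n K} (hE : E * E = E) (hF : F * F = F)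
    {S : Matrix m n K} {A : Matrix n m K}
    (hBA : (1 - E) * S * (1 - F) * A = 1 - E) (hAB : A * ((1 - E) * S * (1 - F)) = 1 - F)
    (hABA : A * ((1 - E) * S * (1 - F)) * A = A) :
    S.rank = ((1 - E) * S * (1 - F)).rank +
      (E * S * F - E * S * (1 - F) * A * (1 - E) * S * F).rank := by
  have hAE : A * E = 0 := by
    rw [← hABA, Matrix.mul_assoc A _ A, hBA, Matrix.mul_assoc, sub_mul, one_mul, hE, sub_self,
      Matrix.mul_zero]
  have hFA : F * A = 0 := by
    rw [← hABA, hAB, ← Matrix.mul_assoc, mul_sub, mul_one, hF, sub_self, Matrix.zero_mul]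
  have hRA : (1 - F) * A = A := by rw [Matrix.sub_mul, Matrix.one_mul, hFA, sub_zero]
  have hAQ : A * (1 - E) = A := by rw [Matrix.mul_sub, Matrix.mul_one, hAE, sub_zero]
  rw [Matrix.mul_assoc (E * S), hRA, Matrix.mul_assoc (E * S) A, hAQ,
    rank_eq_rank_compress_add_schur hAE hFA hBA hAB]
  refine rank_add_eq_of_mul_eq (E := E) (F := F) ?_ ?_ ?_ ?_
  · rw [← Matrix.mul_assoc, ← Matrix.mul_assoc, mul_sub, mul_one, hE, sub_self,
      Matrix.zero_mul, Matrix.zero_mul]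
  · simp only [Matrix.mul_sub, ← Matrix.mul_assoc, hE]
  · rw [Matrix.mul_assoc, sub_mul, one_mul, hF, sub_self, Matrix.mul_zero]
  · simp only [Matrix.sub_mul, Matrix.mul_assoc, hF]

theorem eventually_card_le_rank_add_rank [TopologicalSpace K] [IsTopologicalRing K] [T1Space K]
    [Fintype m] [DecidableEq n] {P : Matrix n n K} {A : Matrix n m K} {T : Matrix m n K}
    (h : P + A * T = 1) : ∀ᶠ S in 𝓝 T, Fintype.card n ≤ P.rank + S.rank := by
  have hcont : Continuous fun S : Matrix m n K => (P + A * S).det := by fun_prop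
  filter_upwards [hcont.continuousAt.eventually_ne (by simp [h] : (P + A * T).det ≠ 0)]
    with S hS
  calc Fintype.card n = (P + A * S).rank := (rank_of_det_ne_zero hS).symm
    _ ≤ P.rank + (A * S).rank := rank_add_le _ _
    _ ≤ P.rank + S.rank := Nat.add_le_add_left (rank_mul_le_right _ _) _

open Matrix.Norms.Elementwise in
theorem exists_pos_forall_abs_sub_lt_of_eventually [Fintype m] {T : Matrix m n ℝ}
    {p : Matrix m n ℝ → Prop} (h : ∀ᶠ S in 𝓝 T, p S) :
    ∃ δ > 0, ∀ S, (∀ i j, |S i j - T i j| < δ) → p S := by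
  obtain ⟨δ, hδ, hball⟩ := Metric.eventually_nhds_iff.1 h
  exact ⟨δ, hδ, fun S hS => hball <| (dist_eq_norm S T).trans_lt <| (norm_lt_iff hδ).2 hS⟩

end Field

section KernelProjection

variable {K : Type*} [Field K] [LinearOrder K] [IsStrictOrderedRing K] {m n : Type*} [Fintype m]
  [Fintype n] [DecidableEq n] {M : Matrix m n K} {P : Matrix n n K}

theorem isUnit_det_transpose_mul_self_add (hPs : Pᵀ = P) (hP : P * P = P)
    (hker : ∀ v, P *ᵥ v = v ↔ M *ᵥ v = 0) : IsUnit (Mᵀ * M + P).det := by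
  have hPG := proj_mul_transpose_mul_self_add hPs hP (mul_eq_zero_of_mulVec_eq_self_iff hP hker)
  refine isUnit_iff_ne_zero.2 fun hdet => ?_
  obtain ⟨v, hv, hGv⟩ := exists_mulVec_eq_zero_iff.2 hdet
  have hPv : P *ᵥ v = 0 := by rw [← hPG, ← mulVec_mulVec, hGv, mulVec_zero]
  have hMMv : (Mᵀ * M) *ᵥ v = 0 := by rwa [add_mulVec, hPv, add_zero] at hGv
  have hMv : M *ᵥ v = 0 := by
    rw [← dotProduct_self_eq_zero]
    calc (M *ᵥ v) ⬝ᵥ (M *ᵥ v) = v ⬝ᵥ (Mᵀ * M) *ᵥ v := by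
          rw [← mulVec_mulVec, dotProduct_mulVec v Mᵀ, vecMul_transpose]
      _ = 0 := by rw [hMMv, dotProduct_zero]
  exact hv (((hker v).2 hMv).symm.trans hPv)

theorem inv_transpose_mul_self_add_mul_transpose_mul (hPs : Pᵀ = P) (hP : P * P = P)
    (hker : ∀ v, P *ᵥ v = v ↔ M *ᵥ v = 0) : (Mᵀ * M + P)⁻¹ * Mᵀ * M = 1 - P := by
  have hG := isUnit_det_transpose_mul_self_add hPs hP hker
  have hGP : (Mᵀ * M + P) * P = P := by
    rw [add_mul, Matrix.mul_assoc, mul_eq_zero_of_mulVec_eq_self_iff hP hker, Matrix.mul_zero,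
      zero_add, hP]
  calc (Mᵀ * M + P)⁻¹ * Mᵀ * M = (Mᵀ * M + P)⁻¹ * ((Mᵀ * M + P) - P) := by
        rw [Matrix.mul_assoc, add_sub_cancel_right]
    _ = 1 - (Mᵀ * M + P)⁻¹ * ((Mᵀ * M + P) * P) := by rw [mul_sub, nonsing_inv_mul _ hG, hGP]
    _ = 1 - P := by rw [← Matrix.mul_assoc, nonsing_inv_mul _ hG, one_mul]

theorem proj_mul_inv_transpose_mul_self_add_mul_transpose (hPs : Pᵀ = P) (hP : P * P = P)
    (hker : ∀ v, P *ᵥ v = v ↔ M *ᵥ v = 0) : P * ((Mᵀ * M + P)⁻¹ * Mᵀ) = 0 := by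
  have hMP := mul_eq_zero_of_mulVec_eq_self_iff hP hker
  have hPGinv : P * (Mᵀ * M + P)⁻¹ = P := by
    calc P * (Mᵀ * M + P)⁻¹ = P * (Mᵀ * M + P) * (Mᵀ * M + P)⁻¹ := by
          rw [proj_mul_transpose_mul_self_add hPs hP hMP]
      _ = P := by
          rw [Matrix.mul_assoc, mul_nonsing_inv _ (isUnit_det_transpose_mul_self_add hPs hP hker),
            mul_one]
  rw [← Matrix.mul_assoc, hPGinv, ← hPs, ← transpose_mul, hMP, transpose_zero]

end KernelProjection

theorem eventually_rank_compress_eq {K : Type*} [Field K] [LinearOrder K] [IsStrictOrderedRing K]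
    [TopologicalSpace K] [IsTopologicalRing K] [T1Space K] {m n : Type*} [Fintype m] [Fintype n]
    [DecidableEq m] [DecidableEq n] {T : Matrix m n K} {P_L : Matrix m m K} {P_R : Matrix n n K}
    (hPLsymm : P_Lᵀ = P_L) (hPLidem : P_L * P_L = P_L) (hPLker : ∀ v, P_L *ᵥ v = v ↔ Tᵀ *ᵥ v = 0)
    (hPRsymm : P_Rᵀ = P_R) (hPRidem : P_R * P_R = P_R) (hPRker : ∀ v, P_R *ᵥ v = v ↔ T *ᵥ v = 0) :
    ∀ᶠ S in 𝓝 T, ((1 - P_L) * S * (1 - P_R)).rank = T.rank := by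
  have hcompress : (1 - P_L) * T * (1 - P_R) = T := one_sub_mul_mul_one_sub_eq_self
    (mul_eq_zero_of_mulVec_eq_self_iff_transpose hPLsymm hPLidem hPLker)
    (mul_eq_zero_of_mulVec_eq_self_iff hPRidem hPRker)
  have hPAT : P_R + (Tᵀ * T + P_R)⁻¹ * Tᵀ * T = 1 := by
    rw [inv_transpose_mul_self_add_mul_transpose_mul hPRsymm hPRidem hPRker, add_sub_cancel]
  have hcont : Continuous fun S : Matrix m n K => (1 - P_L) * S * (1 - P_R) := by fun_prop
  have hlow := (hcont.tendsto T).eventually <|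
    hcompress.symm ▸ eventually_card_le_rank_add_rank hPAT
  filter_upwards [hlow] with S hS
  have hrPR := rank_add_rank_eq_card_of_mulVec_eq_self_iff hPRidem hPRker
  refine le_antisymm ?_ (by omega)
  calc ((1 - P_L) * S * (1 - P_R)).rank ≤ (1 - P_L).rank :=
        (rank_mul_le_left _ _).trans (rank_mul_le_left _ _)
    _ = T.rank := by
      rw [rank_one_sub_eq_rank_of_mulVec_eq_self_iff hPLidem hPLker, rank_transpose]

end Matrix

namespace IsPseudoInv

variable {k l : ℕ} {M : Matrix (Fin k) (Fin l) ℝ} {N : Matrix (Fin l) (Fin k) ℝ}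

theorem transpose (h : IsPseudoInv M N) : IsPseudoInv Mᵀ Nᵀ := by
  obtain ⟨h1, h2, h3, h4⟩ := h
  refine ⟨?_, ?_, ?_, ?_⟩
  · simpa only [transpose_mul, Matrix.mul_assoc] using congrArg Matrix.transpose h1
  · simpa only [transpose_mul, Matrix.mul_assoc] using congrArg Matrix.transpose h2
  · rwa [← transpose_mul, h4]
  · rwa [← transpose_mul, h3]

theorem mul_eq_of_proj_mul_eq (h : IsPseudoInv M N) {Q : Matrix (Fin k) (Fin k) ℝ}
    (hQs : Qᵀ = Q) (hQM : Q * M = M) (hrank : M.rank = Q.rank) : M * N = Q := by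
  have hle : LinearMap.range M.mulVecLin ≤ LinearMap.range Q.mulVecLin := by
    rw [← hQM, mulVecLin_mul]
    exact LinearMap.range_comp_le_range _ _
  have hrange := Submodule.eq_of_le_of_finrank_eq hle hrank
  have hMNQ : M * N * Q = Q := ext_of_mulVec_single fun j => by
    obtain ⟨w, hw⟩ : Q *ᵥ Pi.single j 1 ∈ LinearMap.range M.mulVecLin := hrange ▸ ⟨_, rfl⟩
    rw [← mulVec_mulVec, ← hw, mulVecLin_apply, mulVec_mulVec, h.1]
  calc M * N = Q * (M * N) := by rw [← Matrix.mul_assoc, hQM]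
    _ = (M * N * Q)ᵀ := by rw [transpose_mul, h.2.2.1, hQs]
    _ = Q := by rw [hMNQ, hQs]

theorem mul_eq_of_mul_proj_eq (h : IsPseudoInv M N) {R : Matrix (Fin l) (Fin l) ℝ}
    (hRs : Rᵀ = R) (hMR : M * R = M) (hrank : M.rank = R.rank) : N * M = R := by
  have := h.transpose.mul_eq_of_proj_mul_eq hRs (by rw [← hRs, ← transpose_mul, hMR])
    (by rw [rank_transpose, hrank])
  rw [← transpose_mul] at this
  rw [← hRs, ← this, transpose_transpose]

end IsPseudoInv

theorem isPseudoInv_inv_transpose_mul_self_add_mul_transpose {k l : ℕ}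
    {M : Matrix (Fin k) (Fin l) ℝ} {P : Matrix (Fin l) (Fin l) ℝ} (hPs : Pᵀ = P) (hP : P * P = P)
    (hker : ∀ v, P *ᵥ v = v ↔ M *ᵥ v = 0) : IsPseudoInv M ((Mᵀ * M + P)⁻¹ * Mᵀ) := by
  have hNM := inv_transpose_mul_self_add_mul_transpose_mul hPs hP hker
  refine ⟨?_, ?_, ?_, ?_⟩
  · rw [Matrix.mul_assoc, hNM, Matrix.mul_sub, Matrix.mul_one,
      mul_eq_zero_of_mulVec_eq_self_iff hP hker, sub_zero]
  · rw [hNM, Matrix.sub_mul, Matrix.one_mul,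
      proj_mul_inv_transpose_mul_self_add_mul_transpose hPs hP hker, sub_zero]
  · simp only [transpose_mul, transpose_transpose, transpose_nonsing_inv, transpose_add, hPs,
      Matrix.mul_assoc]
  · rw [hNM, transpose_sub, transpose_one, hPs]

theorem rank_eq_iff_schur_eq_zero {n m r : ℕ} {P_L : Matrix (Fin n) (Fin n) ℝ}
    {P_R : Matrix (Fin m) (Fin m) ℝ} (hPLsymm : P_Lᵀ = P_L) (hPLidem : IsIdempotentElem P_L)
    (hPRsymm : P_Rᵀ = P_R) (hPRidem : IsIdempotentElem P_R) (hrL : (1 - P_L).rank = r)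
    (hrR : (1 - P_R).rank = r) {S : Matrix (Fin n) (Fin m) ℝ}
    (hS : ((1 - P_L) * S * (1 - P_R)).rank = r) {A' : Matrix (Fin m) (Fin n) ℝ}
    (hA' : IsPseudoInv ((1 - P_L) * S * (1 - P_R)) A') :
    S.rank = r ↔ P_L * S * P_R - P_L * S * (1 - P_R) * A' * (1 - P_L) * S * P_R = 0 := by
  have hBA := hA'.mul_eq_of_proj_mul_eq (by rw [transpose_sub, transpose_one, hPLsymm])
    (by rw [← Matrix.mul_assoc, ← Matrix.mul_assoc, hPLidem.one_sub.eq]) (hS.trans hrL.symm)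
  have hAB := hA'.mul_eq_of_mul_proj_eq (by rw [transpose_sub, transpose_one, hPRsymm])
    (by rw [Matrix.mul_assoc, hPRidem.one_sub.eq]) (hS.trans hrR.symm)
  rw [rank_eq_rank_add_rank_schur hPLidem hPRidem hBA hAB hA'.2.1, hS, add_eq_left,
    Matrix.rank_eq_zero_iff]

theorem stmt18 {n m : ℕ} (r : ℕ) (T : Matrix (Fin n) (Fin m) ℝ) (hT : T.rank = r)
    (P_L : Matrix (Fin n) (Fin n) ℝ) (P_R : Matrix (Fin m) (Fin m) ℝ)
    (hPLsymm : Matrix.transpose P_L = P_L) (hPLidem : P_L * P_L = P_L)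
    (hPLker : ∀ v : Fin n → ℝ, P_L *ᵥ v = v ↔ Matrix.transpose T *ᵥ v = 0)
    (hPRsymm : Matrix.transpose P_R = P_R) (hPRidem : P_R * P_R = P_R)
    (hPRker : ∀ v : Fin m → ℝ, P_R *ᵥ v = v ↔ T *ᵥ v = 0) :
    ∃ A : Matrix (Fin m) (Fin n) ℝ, P_R * A = 0 ∧ A * P_L = 0 ∧
      IsPseudoInv ((1 - P_L) * T * (1 - P_R)) A ∧
      (∃ δ > (0:ℝ), ∀ S : Matrix (Fin n) (Fin m) ℝ, (∀ i j, |S i j - T i j| < δ) →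
        ∀ A' : Matrix (Fin m) (Fin n) ℝ, IsPseudoInv ((1 - P_L) * S * (1 - P_R)) A' →
          (S.rank = r ↔
            P_L * S * P_R - P_L * S * (1 - P_R) * A' * (1 - P_L) * S * P_R = 0)) ∧
      P_L * T * P_R - P_L * T * (1 - P_R) * A * (1 - P_L) * T * P_R = 0 := by
  have hPLT := mul_eq_zero_of_mulVec_eq_self_iff_transpose hPLsymm hPLidem hPLker
  have hTtPL := mul_eq_zero_of_mulVec_eq_self_iff hPLidem hPLker
  have hrL : (1 - P_L).rank = r := by
    rw [rank_one_sub_eq_rank_of_mulVec_eq_self_iff hPLidem hPLker, rank_transpose, hT]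
  have hrR : (1 - P_R).rank = r := by
    rw [rank_one_sub_eq_rank_of_mulVec_eq_self_iff hPRidem hPRker, hT]
  obtain ⟨δ, hδ, hδS⟩ := exists_pos_forall_abs_sub_lt_of_eventually
    (eventually_rank_compress_eq hPLsymm hPLidem hPLker hPRsymm hPRidem hPRker)
  refine ⟨(Tᵀ * T + P_R)⁻¹ * Tᵀ,
    proj_mul_inv_transpose_mul_self_add_mul_transpose hPRsymm hPRidem hPRker,
    by rw [Matrix.mul_assoc, hTtPL, Matrix.mul_zero], ?_,
    ⟨δ, hδ, fun S hS A' hA' => rank_eq_iff_schur_eq_zero hPLsymm hPLidem hPRsymm hPRidem hrL hrR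
      ((hδS S hS).trans hT) hA'⟩, by simp [hPLT]⟩
  rw [one_sub_mul_mul_one_sub_eq_self hPLT (mul_eq_zero_of_mulVec_eq_self_iff hPRidem hPRker)]
  exact isPseudoInv_inv_transpose_mul_self_add_mul_transpose hPRsymm hPRidem hPRker
end
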